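/- arXiv:2307.09131 — 2 statements merged into one kernel-verified Lean document; each statement's English description precedes it below -/
import Mathlib

section
/- (Hlawka–Koksma inequality in dimension 2.) Let f : [0,1]^2 → ℝ have continuous mixed partial derivatives of order one (i.e. ∂f/∂u, ∂f/∂v and ∂²f/∂u∂v exist and are continuous on [0,1]^2), and define the norm ‖f‖_{2,1} = |f(1,1)| + ∫_0^1 |∂f/∂u (u,1)| du + ∫_0^1 |∂f/∂v (1,v)| dv + ∫_0^1 ∫_0^1 |∂²f/∂u∂v (u,v)| du dv. Then for every finite sequence x^(1), …, x^(N) of points in [0,1)^2, | (1/N) Σ_{n=1}^{N} f(x^(n)) − ∫_{[0,1]^2} f(ν) dν | ≤ ‖f‖_{2,1} · D*_N(S). -/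
open Filter MeasureTheory
open scoped Classical

/-- The star discrepancy of a finite sequence `x⁽¹⁾, …, x⁽ᴺ⁾` of points of `[0,1)²`:
`D*_N(S) = sup_{y ∈ [0,1)²} | A([0,y), S|_N)/N − leb([0,y)) |`. -/
noncomputable def starDiscrepancy2 {N : ℕ} (x : Fin N → ℝ × ℝ) : ℝ :=
  ⨆ y : {y : ℝ × ℝ // y.1 ∈ Set.Ico (0 : ℝ) 1 ∧ y.2 ∈ Set.Ico (0 : ℝ) 1},
    |((Finset.univ.filter (fun n : Fin N =>
          (x n).1 ∈ Set.Ico (0 : ℝ) (y.1).1 ∧ (x n).2 ∈ Set.Ico (0 : ℝ) (y.1).2)).card : ℝ)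
        / N - (y.1).1 * (y.1).2|

/-!
Three applications of the fundamental theorem of calculus give Zaremba's identity
`f(a,b) = f(1,1) - ∫_a^1 f_u(u,1) du - ∫_b^1 f_v(1,v) dv + ∫_a^1 ∫_b^1 f_uv(u,v) dv du`
for `(a,b) ∈ [0,1]²`. Writing `∫_a^1` as an integral over `{u | a < u}` and integrating the
identity against a probability measure `μ` on the square, Fubini turns each term into an integral
of a derivative of `f` against the distribution function `w ↦ μ {p | p₁ < w₁ ∧ p₂ < w₂}` (or one
of its marginals). For the empirical measure of the points and for Lebesgue measure these
distribution functions differ by the local discrepancy, which the star discrepancy bounds.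
-/

open Set
open scoped ENNReal Finset Topology

theorem intervalIntegral_eq_sub_of_hasDerivWithinAt_Icc {g g' : ℝ → ℝ} {c d a : ℝ}
    (hg : ∀ t ∈ Icc c d, HasDerivWithinAt g (g' t) (Icc c d) t)
    (hg' : ContinuousOn g' (Icc c d)) (ha : a ∈ Icc c d) :
    ∫ u in a..d, g' u = g d - g a := by
  have hsub : Icc a d ⊆ Icc c d := Icc_subset_Icc_left ha.1
  refine intervalIntegral.integral_eq_sub_of_hasDeriv_right_of_le ha.2
    (fun t ht => (hg t (hsub ht)).continuousWithinAt.mono hsub) (fun t ht => ?_)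
    ((hg'.mono hsub).intervalIntegrable_of_Icc ha.2)
  have ht' : t ∈ Icc c d := hsub (Ioo_subset_Icc_self ht)
  exact (hg t ht').mono_of_mem_nhdsWithin (Icc_mem_nhdsGT_of_mem ⟨ht'.1, ht.2⟩)

section SetIntegralFamily

variable {α β : Type*} [MeasurableSpace α] [MeasurableSpace β] {μ : Measure α} {ν : Measure β}
  {S : α → Set β} {g : β → ℝ}

theorem setIntegral_eq_integral_indicator_mem (hS : MeasurableSet {q : α × β | q.2 ∈ S q.1})
    (a : α) : ∫ b in S a, g b ∂ν = ∫ b, {q : α × β | q.2 ∈ S q.1}.indicator (g ·.2) (a, b) ∂ν :=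
  (integral_indicator (measurable_prodMk_left hS)).symm

theorem integral_indicator_mem_eq_measureReal_mul
    (hS : MeasurableSet {q : α × β | q.2 ∈ S q.1}) (b : β) :
    ∫ a, {q : α × β | q.2 ∈ S q.1}.indicator (g ·.2) (a, b) ∂μ = μ.real {a | b ∈ S a} * g b :=
  (integral_indicator_const (g b) (measurable_prodMk_right hS)).trans (smul_eq_mul _ _)

variable [IsFiniteMeasure μ] [SFinite ν]

theorem integrable_indicator_mem (hS : MeasurableSet {q : α × β | q.2 ∈ S q.1})
    (hg : Integrable g ν) :
    Integrable ({q : α × β | q.2 ∈ S q.1}.indicator (g ·.2)) (μ.prod ν) :=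
  (hg.comp_snd μ).indicator hS

theorem integrable_setIntegral_family (hS : MeasurableSet {q : α × β | q.2 ∈ S q.1})
    (hg : Integrable g ν) : Integrable (fun a => ∫ b in S a, g b ∂ν) μ := by
  simp_rw [setIntegral_eq_integral_indicator_mem hS]
  exact (integrable_indicator_mem hS hg).integral_prod_left

theorem integrable_measureReal_mul (hS : MeasurableSet {q : α × β | q.2 ∈ S q.1})
    (hg : Integrable g ν) : Integrable (fun b => μ.real {a | b ∈ S a} * g b) ν := by
  simp_rw [← integral_indicator_mem_eq_measureReal_mul hS]
  exact (integrable_indicator_mem hS hg).integral_prod_right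

theorem integral_setIntegral_family (hS : MeasurableSet {q : α × β | q.2 ∈ S q.1})
    (hg : Integrable g ν) :
    ∫ a, ∫ b in S a, g b ∂ν ∂μ = ∫ b, μ.real {a | b ∈ S a} * g b ∂ν := by
  simp_rw [setIntegral_eq_integral_indicator_mem hS,
    ← integral_indicator_mem_eq_measureReal_mul hS]
  exact integral_integral_swap (integrable_indicator_mem hS hg)

theorem integral_measureReal_mul_sub_integral_measureReal_mul {μ₁ μ₂ : Measure α}
    [IsFiniteMeasure μ₁] [IsFiniteMeasure μ₂] (hS : MeasurableSet {q : α × β | q.2 ∈ S q.1})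
    (hg : Integrable g ν) :
    ∫ b, μ₁.real {a | b ∈ S a} * g b ∂ν - ∫ b, μ₂.real {a | b ∈ S a} * g b ∂ν
      = ∫ b, (μ₁.real {a | b ∈ S a} - μ₂.real {a | b ∈ S a}) * g b ∂ν := by
  simp_rw [sub_mul]
  exact (integral_sub (integrable_measureReal_mul hS hg) (integrable_measureReal_mul hS hg)).symm

end SetIntegralFamily

theorem abs_setIntegral_mul_le {α : Type*} [MeasurableSpace α] {μ : Measure α} {s : Set α}
    {φ g : α → ℝ} {D : ℝ} (hs : MeasurableSet s) (hg : IntegrableOn g s μ)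
    (hφ : ∀ x ∈ s, |φ x| ≤ D) :
    |∫ x in s, φ x * g x ∂μ| ≤ D * ∫ x in s, |g x| ∂μ := by
  rw [← integral_const_mul D, ← Real.norm_eq_abs]
  refine norm_integral_le_of_norm_le (hg.abs.const_mul D) ((ae_restrict_iff' hs).2 ?_)
  refine ae_of_all _ fun x hx => ?_
  rw [norm_mul, Real.norm_eq_abs, Real.norm_eq_abs]
  exact mul_le_mul_of_nonneg_right (hφ x hx) (abs_nonneg _)

theorem setIntegral_Ioc_prod_Ioc {a b c d : ℝ} (hab : a ≤ b) (hcd : c ≤ d) {G : ℝ → ℝ → ℝ}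
    (hG : IntegrableOn (fun w : ℝ × ℝ => G w.1 w.2) (Ioc a b ×ˢ Ioc c d)) :
    ∫ w in Ioc a b ×ˢ Ioc c d, G w.1 w.2 = ∫ u in a..b, ∫ v in c..d, G u v := by
  rw [Measure.volume_eq_prod] at hG ⊢
  rw [setIntegral_prod _ hG, intervalIntegral.integral_of_le hab]
  exact setIntegral_congr_fun measurableSet_Ioc fun u _ =>
    (intervalIntegral.integral_of_le hcd).symm

theorem volume_restrict_Ico_prod_Ico (a b c d : ℝ) :
    volume.restrict (Ico a b ×ˢ Ico c d) = volume.restrict (Ioc a b ×ˢ Ioc c d) := by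
  simp only [Measure.volume_eq_prod, ← Measure.prod_restrict,
    Measure.restrict_congr_set Ico_ae_eq_Ioc]

theorem setIntegral_Ioi_restrict_Ioc {a : ℝ} (ha : a ∈ Icc (0 : ℝ) 1) (g : ℝ → ℝ) :
    ∫ u in Ioi a, g u ∂volume.restrict (Ioc 0 1) = ∫ u in a..1, g u := by
  rw [Measure.restrict_restrict measurableSet_Ioi, inter_comm, Ioc_inter_Ioi,
    sup_of_le_right ha.1, intervalIntegral.integral_of_le ha.2]

theorem setIntegral_Ioi_prod_Ioi_restrict {a b : ℝ} (ha : a ∈ Icc (0 : ℝ) 1)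
    (hb : b ∈ Icc (0 : ℝ) 1) {G : ℝ → ℝ → ℝ}
    (hG : IntegrableOn (fun w : ℝ × ℝ => G w.1 w.2) (Ioc 0 1 ×ˢ Ioc 0 1)) :
    ∫ w in Ioi a ×ˢ Ioi b, G w.1 w.2 ∂volume.restrict (Ioc 0 1 ×ˢ Ioc 0 1)
      = ∫ u in a..1, ∫ v in b..1, G u v := by
  have hsub : Ioc a 1 ×ˢ Ioc b 1 = (Ioi a ×ˢ Ioi b) ∩ (Ioc 0 1 ×ˢ Ioc 0 1) := by
    rw [prod_inter_prod, inter_comm, Ioc_inter_Ioi, inter_comm (Ioi b), Ioc_inter_Ioi,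
      sup_of_le_right ha.1, sup_of_le_right hb.1]
  rw [Measure.restrict_restrict (measurableSet_Ioi.prod measurableSet_Ioi), ← hsub,
    setIntegral_Ioc_prod_Ioc ha.2 hb.2 (hG.mono_set (hsub ▸ inter_subset_right))]

theorem measurableSet_mem_Ioi_fst : MeasurableSet {q : (ℝ × ℝ) × ℝ | q.2 ∈ Ioi q.1.1} :=
  measurableSet_lt measurable_fst.fst measurable_snd

theorem measurableSet_mem_Ioi_snd : MeasurableSet {q : (ℝ × ℝ) × ℝ | q.2 ∈ Ioi q.1.2} :=
  measurableSet_lt measurable_fst.snd measurable_snd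

theorem measurableSet_mem_Ioi_prod_Ioi :
    MeasurableSet {q : (ℝ × ℝ) × (ℝ × ℝ) | q.2 ∈ Ioi q.1.1 ×ˢ Ioi q.1.2} :=
  (measurableSet_lt measurable_fst.fst measurable_snd.fst).inter
    (measurableSet_lt measurable_fst.snd measurable_snd.snd)

theorem measureReal_setOf_eq_measureReal_Ico_prod_Ico {μ : Measure (ℝ × ℝ)}
    (hμ : ∀ᵐ p ∂μ, p ∈ Ico (0 : ℝ) 1 ×ˢ Ico (0 : ℝ) 1) {P : ℝ × ℝ → Prop} {u v : ℝ}
    (hP : ∀ p ∈ Ico (0 : ℝ) 1 ×ˢ Ico (0 : ℝ) 1, P p ↔ p.1 < u ∧ p.2 < v) :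
    μ.real {p | P p} = μ.real (Ico 0 u ×ˢ Ico 0 v) :=
  measureReal_congr <| hμ.mono fun p hp => propext
    (show P p ↔ p ∈ Ico 0 u ×ˢ Ico 0 v by rw [hP p hp]; simp [hp.1.1, hp.2.1])

structure HasContinuousMixedPartials (f fu fv fuv : ℝ → ℝ → ℝ) : Prop where
  hasDerivWithinAt_fst : ∀ v ∈ Icc (0 : ℝ) 1, ∀ u ∈ Icc (0 : ℝ) 1,
    HasDerivWithinAt (fun t => f t v) (fu u v) (Icc 0 1) u
  hasDerivWithinAt_snd : ∀ u ∈ Icc (0 : ℝ) 1, ∀ v ∈ Icc (0 : ℝ) 1,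
    HasDerivWithinAt (fun t => f u t) (fv u v) (Icc 0 1) v
  hasDerivWithinAt_fst_snd : ∀ u ∈ Icc (0 : ℝ) 1, ∀ v ∈ Icc (0 : ℝ) 1,
    HasDerivWithinAt (fun t => fu u t) (fuv u v) (Icc 0 1) v
  continuousOn_fst : ContinuousOn (fun p : ℝ × ℝ => fu p.1 p.2) (Icc 0 1 ×ˢ Icc 0 1)
  continuousOn_snd : ContinuousOn (fun p : ℝ × ℝ => fv p.1 p.2) (Icc 0 1 ×ˢ Icc 0 1)
  continuousOn_fst_snd : ContinuousOn (fun p : ℝ × ℝ => fuv p.1 p.2) (Icc 0 1 ×ˢ Icc 0 1)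

namespace HasContinuousMixedPartials

variable {f fu fv fuv : ℝ → ℝ → ℝ}

theorem eq_sub_sub_add (hf : HasContinuousMixedPartials f fu fv fuv) {a b : ℝ}
    (ha : a ∈ Icc (0 : ℝ) 1) (hb : b ∈ Icc (0 : ℝ) 1) :
    f a b = f 1 1 - (∫ u in a..1, fu u 1) - (∫ v in b..1, fv 1 v)
      + ∫ u in a..1, ∫ v in b..1, fuv u v := by
  have h1 : (1 : ℝ) ∈ Icc (0 : ℝ) 1 := right_mem_Icc.2 zero_le_one
  have ftc_fst : ∀ v ∈ Icc (0 : ℝ) 1, ∫ u in a..1, fu u v = f 1 v - f a v := fun v hv =>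
    intervalIntegral_eq_sub_of_hasDerivWithinAt_Icc (hf.hasDerivWithinAt_fst v hv)
      (hf.continuousOn_fst.uncurry_right v hv) ha
  have ftc_snd : ∫ v in b..1, fv 1 v = f 1 1 - f 1 b :=
    intervalIntegral_eq_sub_of_hasDerivWithinAt_Icc (hf.hasDerivWithinAt_snd 1 h1)
      (hf.continuousOn_snd.uncurry_left 1 h1) hb
  have ftc_mixed :
      EqOn (fun u => ∫ v in b..1, fuv u v) (fun u => fu u 1 - fu u b) (uIcc a 1) :=
    fun u hu => intervalIntegral_eq_sub_of_hasDerivWithinAt_Icc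
      (hf.hasDerivWithinAt_fst_snd u (uIcc_subset_Icc ha h1 hu))
      (hf.continuousOn_fst_snd.uncurry_left u (uIcc_subset_Icc ha h1 hu)) hb
  have hint : ∀ v ∈ Icc (0 : ℝ) 1, IntervalIntegrable (fun u => fu u v) volume a 1 :=
    fun v hv =>
      ((hf.continuousOn_fst.uncurry_right v hv).mono (uIcc_subset_Icc ha h1)).intervalIntegrable
  rw [intervalIntegral.integral_congr ftc_mixed, intervalIntegral.integral_sub (hint 1 h1)
    (hint b hb), ftc_fst 1 h1, ftc_fst b hb, ftc_snd]
  ring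

theorem integrableOn_fst_one (hf : HasContinuousMixedPartials f fu fv fuv) :
    IntegrableOn (fun u => fu u 1) (Ioc 0 1) :=
  (hf.continuousOn_fst.uncurry_right 1 (right_mem_Icc.2 zero_le_one)).integrableOn_Icc.mono_set
    Ioc_subset_Icc_self

theorem integrableOn_snd_one (hf : HasContinuousMixedPartials f fu fv fuv) :
    IntegrableOn (fun v => fv 1 v) (Ioc 0 1) :=
  (hf.continuousOn_snd.uncurry_left 1 (right_mem_Icc.2 zero_le_one)).integrableOn_Icc.mono_set
    Ioc_subset_Icc_self

theorem integrableOn_fst_snd (hf : HasContinuousMixedPartials f fu fv fuv) :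
    IntegrableOn (fun w : ℝ × ℝ => fuv w.1 w.2) (Ioc 0 1 ×ˢ Ioc 0 1) :=
  (hf.continuousOn_fst_snd.integrableOn_compact (isCompact_Icc.prod isCompact_Icc)).mono_set
    (prod_mono Ioc_subset_Icc_self Ioc_subset_Icc_self)

theorem ae_eq_sub_sub_add (hf : HasContinuousMixedPartials f fu fv fuv) {μ : Measure (ℝ × ℝ)}
    (hμ : ∀ᵐ p ∂μ, p ∈ Icc (0 : ℝ) 1 ×ˢ Icc (0 : ℝ) 1) :
    (fun p : ℝ × ℝ => f p.1 p.2) =ᵐ[μ] fun p => f 1 1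
      - (∫ u in Ioi p.1, fu u 1 ∂volume.restrict (Ioc 0 1))
      - (∫ v in Ioi p.2, fv 1 v ∂volume.restrict (Ioc 0 1))
      + ∫ w in Ioi p.1 ×ˢ Ioi p.2, fuv w.1 w.2 ∂volume.restrict (Ioc 0 1 ×ˢ Ioc 0 1) :=
  hμ.mono fun p hp => by
    dsimp only
    rw [setIntegral_Ioi_restrict_Ioc hp.1, setIntegral_Ioi_restrict_Ioc hp.2,
      setIntegral_Ioi_prod_Ioi_restrict hp.1 hp.2 hf.integrableOn_fst_snd]
    exact hf.eq_sub_sub_add hp.1 hp.2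

theorem integrable (hf : HasContinuousMixedPartials f fu fv fuv) {μ : Measure (ℝ × ℝ)}
    [IsFiniteMeasure μ] (hμ : ∀ᵐ p ∂μ, p ∈ Icc (0 : ℝ) 1 ×ˢ Icc (0 : ℝ) 1) :
    Integrable (fun p : ℝ × ℝ => f p.1 p.2) μ := by
  have h₁ := integrable_setIntegral_family (μ := μ) (S := fun p : ℝ × ℝ => Ioi p.1)
    measurableSet_mem_Ioi_fst hf.integrableOn_fst_one
  have h₂ := integrable_setIntegral_family (μ := μ) (S := fun p : ℝ × ℝ => Ioi p.2)
    measurableSet_mem_Ioi_snd hf.integrableOn_snd_one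
  have h := integrable_setIntegral_family (μ := μ) (S := fun p : ℝ × ℝ => Ioi p.1 ×ˢ Ioi p.2)
    measurableSet_mem_Ioi_prod_Ioi hf.integrableOn_fst_snd
  exact ((((integrable_const (f 1 1)).sub' h₁).sub' h₂).fun_add h).congr
    (hf.ae_eq_sub_sub_add hμ).symm

theorem integral_eq (hf : HasContinuousMixedPartials f fu fv fuv) {μ : Measure (ℝ × ℝ)}
    [IsProbabilityMeasure μ] (hμ : ∀ᵐ p ∂μ, p ∈ Icc (0 : ℝ) 1 ×ˢ Icc (0 : ℝ) 1) :
    ∫ p, f p.1 p.2 ∂μ = f 1 1 - (∫ u in Ioc 0 1, μ.real {p | p.1 < u} * fu u 1)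
      - (∫ v in Ioc 0 1, μ.real {p | p.2 < v} * fv 1 v)
      + ∫ w in Ioc 0 1 ×ˢ Ioc 0 1, μ.real {p | p.1 < w.1 ∧ p.2 < w.2} * fuv w.1 w.2 := by
  have h₁ := integrable_setIntegral_family (μ := μ) (S := fun p : ℝ × ℝ => Ioi p.1)
    measurableSet_mem_Ioi_fst hf.integrableOn_fst_one
  have h₂ := integrable_setIntegral_family (μ := μ) (S := fun p : ℝ × ℝ => Ioi p.2)
    measurableSet_mem_Ioi_snd hf.integrableOn_snd_one
  have h := integrable_setIntegral_family (μ := μ) (S := fun p : ℝ × ℝ => Ioi p.1 ×ˢ Ioi p.2)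
    measurableSet_mem_Ioi_prod_Ioi hf.integrableOn_fst_snd
  rw [integral_congr_ae (hf.ae_eq_sub_sub_add hμ),
    integral_add (((integrable_const (f 1 1)).sub' h₁).sub' h₂) h,
    integral_sub ((integrable_const (f 1 1)).sub' h₁) h₂, integral_sub (integrable_const _) h₁,
    integral_const, probReal_univ, one_smul,
    integral_setIntegral_family (S := fun p : ℝ × ℝ => Ioi p.1) measurableSet_mem_Ioi_fst
      hf.integrableOn_fst_one,
    integral_setIntegral_family (S := fun p : ℝ × ℝ => Ioi p.2) measurableSet_mem_Ioi_snd
      hf.integrableOn_snd_one,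
    integral_setIntegral_family (S := fun p : ℝ × ℝ => Ioi p.1 ×ˢ Ioi p.2)
      measurableSet_mem_Ioi_prod_Ioi hf.integrableOn_fst_snd]
  rfl

theorem abs_integral_sub_integral_le (hf : HasContinuousMixedPartials f fu fv fuv)
    {μ ν : Measure (ℝ × ℝ)} [IsProbabilityMeasure μ] [IsProbabilityMeasure ν]
    (hμ : ∀ᵐ p ∂μ, p ∈ Ico (0 : ℝ) 1 ×ˢ Ico (0 : ℝ) 1)
    (hν : ∀ᵐ p ∂ν, p ∈ Ico (0 : ℝ) 1 ×ˢ Ico (0 : ℝ) 1) {D : ℝ}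
    (hD : ∀ u ∈ Ioc (0 : ℝ) 1, ∀ v ∈ Ioc (0 : ℝ) 1,
      |μ.real (Ico 0 u ×ˢ Ico 0 v) - ν.real (Ico 0 u ×ˢ Ico 0 v)| ≤ D) :
    |∫ p, f p.1 p.2 ∂μ - ∫ p, f p.1 p.2 ∂ν|
      ≤ D * ((∫ u in Ioc 0 1, |fu u 1|) + (∫ v in Ioc 0 1, |fv 1 v|)
        + ∫ w in Ioc 0 1 ×ˢ Ioc 0 1, |fuv w.1 w.2|) := by
  have h1 : (1 : ℝ) ∈ Ioc (0 : ℝ) 1 := right_mem_Ioc.2 zero_lt_one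
  have hIcc : Ico (0 : ℝ) 1 ×ˢ Ico (0 : ℝ) 1 ⊆ Icc 0 1 ×ˢ Icc 0 1 :=
    prod_mono Ico_subset_Icc_self Ico_subset_Icc_self
  have hD₁ : ∀ u ∈ Ioc (0 : ℝ) 1, |μ.real {p | p.1 < u} - ν.real {p | p.1 < u}| ≤ D :=
    fun u hu => by
      have hP : ∀ p ∈ Ico (0 : ℝ) 1 ×ˢ Ico (0 : ℝ) 1, p.1 < u ↔ p.1 < u ∧ p.2 < 1 :=
        fun p hp => ⟨fun h => ⟨h, hp.2.2⟩, And.left⟩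
      rw [measureReal_setOf_eq_measureReal_Ico_prod_Ico hμ hP,
        measureReal_setOf_eq_measureReal_Ico_prod_Ico hν hP]
      exact hD u hu 1 h1
  have hD₂ : ∀ v ∈ Ioc (0 : ℝ) 1, |μ.real {p | p.2 < v} - ν.real {p | p.2 < v}| ≤ D :=
    fun v hv => by
      have hP : ∀ p ∈ Ico (0 : ℝ) 1 ×ˢ Ico (0 : ℝ) 1, p.2 < v ↔ p.1 < 1 ∧ p.2 < v :=
        fun p hp => ⟨fun h => ⟨hp.1.2, h⟩, And.right⟩
      rw [measureReal_setOf_eq_measureReal_Ico_prod_Ico hμ hP,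
        measureReal_setOf_eq_measureReal_Ico_prod_Ico hν hP]
      exact hD 1 h1 v hv
  have hD₁₂ : ∀ w ∈ Ioc (0 : ℝ) 1 ×ˢ Ioc (0 : ℝ) 1,
      |μ.real {p | p.1 < w.1 ∧ p.2 < w.2} - ν.real {p | p.1 < w.1 ∧ p.2 < w.2}| ≤ D :=
    fun w hw => by
      rw [measureReal_setOf_eq_measureReal_Ico_prod_Ico hμ fun p _ => Iff.rfl,
        measureReal_setOf_eq_measureReal_Ico_prod_Ico hν fun p _ => Iff.rfl]
      exact hD w.1 hw.1 w.2 hw.2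
  have e₁ := integral_measureReal_mul_sub_integral_measureReal_mul (μ₁ := μ) (μ₂ := ν)
    (S := fun p : ℝ × ℝ => Ioi p.1) measurableSet_mem_Ioi_fst hf.integrableOn_fst_one
  have e₂ := integral_measureReal_mul_sub_integral_measureReal_mul (μ₁ := μ) (μ₂ := ν)
    (S := fun p : ℝ × ℝ => Ioi p.2) measurableSet_mem_Ioi_snd hf.integrableOn_snd_one
  have e₁₂ := integral_measureReal_mul_sub_integral_measureReal_mul (μ₁ := μ) (μ₂ := ν)
    (S := fun p : ℝ × ℝ => Ioi p.1 ×ˢ Ioi p.2) measurableSet_mem_Ioi_prod_Ioi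
    hf.integrableOn_fst_snd
  simp only [mem_Ioi, mem_prod] at e₁ e₂ e₁₂
  rw [hf.integral_eq (hμ.mono fun p hp => hIcc hp), hf.integral_eq (hν.mono fun p hp => hIcc hp),
    show ∀ A a b c a' b' c' : ℝ,
      A - a - b + c - (A - a' - b' + c') = c - c' - (a - a') - (b - b')
      from fun _ _ _ _ _ _ _ => by ring, e₁, e₂, e₁₂]
  calc _ ≤ _ := (abs_sub _ _).trans (add_le_add_left (abs_sub _ _) _)
    _ ≤ D * _ + D * _ + D * _ := add_le_add (add_le_add
          (abs_setIntegral_mul_le (measurableSet_Ioc.prod measurableSet_Ioc)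
            hf.integrableOn_fst_snd hD₁₂)
          (abs_setIntegral_mul_le measurableSet_Ioc hf.integrableOn_fst_one hD₁))
        (abs_setIntegral_mul_le measurableSet_Ioc hf.integrableOn_snd_one hD₂)
    _ = _ := by ring

end HasContinuousMixedPartials

noncomputable def empiricalMeasure {α : Type*} [MeasurableSpace α] {N : ℕ} (x : Fin N → α) :
    Measure α :=
  (N : ℝ≥0∞)⁻¹ • ∑ n, Measure.dirac (x n)

section EmpiricalMeasure

variable {α : Type*} [MeasurableSpace α] [MeasurableSingletonClass α] {N : ℕ} (x : Fin N → α)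

theorem empiricalMeasure_apply (s : Set α) :
    empiricalMeasure x s = (N : ℝ≥0∞)⁻¹ * #{n | x n ∈ s} := by
  simp [empiricalMeasure, Measure.dirac_apply, indicator_apply, Finset.sum_boole]

theorem empiricalMeasure_real_apply (s : Set α) :
    (empiricalMeasure x).real s = #{n | x n ∈ s} / N := by
  simp [measureReal_def, empiricalMeasure_apply, div_eq_inv_mul]

instance [NeZero N] : IsProbabilityMeasure (empiricalMeasure x) :=
  ⟨by simpa [empiricalMeasure_apply] using
    ENNReal.inv_mul_cancel (NeZero.ne (N : ℝ≥0∞)) (ENNReal.natCast_ne_top N)⟩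

theorem integral_empiricalMeasure (f : α → ℝ) :
    ∫ a, f a ∂empiricalMeasure x = (∑ n, f (x n)) / N := by
  rw [empiricalMeasure, integral_smul_measure,
    integral_finsetSum_measure fun n _ => integrable_dirac enorm_lt_top]
  simp [integral_dirac, div_eq_inv_mul]

theorem ae_empiricalMeasure_mem {K : Set α} (hx : ∀ n, x n ∈ K) :
    ∀ᵐ a ∂empiricalMeasure x, a ∈ K := by
  simp [ae_iff, empiricalMeasure_apply, hx]

end EmpiricalMeasure

instance : IsProbabilityMeasure (volume.restrict (Ico (0 : ℝ) 1 ×ˢ Ico (0 : ℝ) 1)) :=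
  ⟨by simp [Measure.volume_eq_prod, Measure.prod_prod]⟩

theorem volume_real_Ico_prod_Ico {u v : ℝ} (hu : u ∈ Icc (0 : ℝ) 1) (hv : v ∈ Icc (0 : ℝ) 1) :
    (volume.restrict (Ico (0 : ℝ) 1 ×ˢ Ico (0 : ℝ) 1)).real (Ico 0 u ×ˢ Ico 0 v) = u * v := by
  rw [measureReal_restrict_apply (measurableSet_Ico.prod measurableSet_Ico),
    inter_eq_left.2 (prod_mono (Ico_subset_Ico_right hu.2) (Ico_subset_Ico_right hv.2)),
    Measure.volume_eq_prod, measureReal_prod_prod]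
  simp [hu.1, hv.1]

theorem integral_volume_restrict_Ico_prod_Ico {f : ℝ → ℝ → ℝ}
    (hf : Integrable (fun p : ℝ × ℝ => f p.1 p.2) (volume.restrict (Ico 0 1 ×ˢ Ico 0 1))) :
    ∫ p, f p.1 p.2 ∂volume.restrict (Ico 0 1 ×ˢ Ico 0 1)
      = ∫ u in (0 : ℝ)..1, ∫ v in (0 : ℝ)..1, f u v := by
  rw [volume_restrict_Ico_prod_Ico] at hf ⊢
  exact setIntegral_Ioc_prod_Ioc zero_le_one zero_le_one hf

/-- The supremum defining `starDiscrepancy2` only runs over boxes with corner in `[0,1)²`; corners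
with `u = 1` or `v = 1` are reached as limits `t → 1⁻`, along which the point count is eventually
constant because every point lies in `[0,1)²`. -/
theorem abs_card_div_sub_mul_le_starDiscrepancy2 {N : ℕ} {x : Fin N → ℝ × ℝ}
    (hx : ∀ n, (x n).1 ∈ Ico (0 : ℝ) 1 ∧ (x n).2 ∈ Ico (0 : ℝ) 1) {u v : ℝ}
    (hu : u ∈ Icc (0 : ℝ) 1) (hv : v ∈ Icc (0 : ℝ) 1) :
    |((Finset.univ.filter (fun n : Fin N =>
          (x n).1 ∈ Ico (0 : ℝ) u ∧ (x n).2 ∈ Ico (0 : ℝ) v)).card : ℝ) / N - u * v|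
      ≤ starDiscrepancy2 x := by
  set c : ℝ := ((Finset.univ.filter (fun n : Fin N =>
    (x n).1 ∈ Ico (0 : ℝ) u ∧ (x n).2 ∈ Ico (0 : ℝ) v)).card : ℝ) / N with hc
  have hnear : ∀ᶠ t in 𝓝[<] (1 : ℝ), t ∈ Ioo (0 : ℝ) 1 ∧ ∀ n, (x n).1 < t ∧ (x n).2 < t :=
    Eventually.and (Ioo_mem_nhdsLT zero_lt_one) <| eventually_all.2 fun n =>
      (Eventually.and (Ioo_mem_nhdsLT (hx n).1.2) (Ioo_mem_nhdsLT (hx n).2.2)).mono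
        fun _ ht => ⟨ht.1.1, ht.2.1⟩
  have hlim : Tendsto (fun t => |c - min u t * min v t|) (𝓝[<] 1) (𝓝 |c - u * v|) := by
    simpa [min_eq_left hu.2, min_eq_left hv.2] using
      ((by fun_prop : Continuous fun t => |c - min u t * min v t|).tendsto 1).mono_left
        nhdsWithin_le_nhds
  refine le_of_tendsto hlim (hnear.mono fun t ⟨ht, hxt⟩ => ?_)
  refine (le_ciSup ⟨1, ?_⟩ ⟨(min u t, min v t), ⟨le_min hu.1 ht.1.le, min_lt_of_right_lt ht.2⟩,
    ⟨le_min hv.1 ht.1.le, min_lt_of_right_lt ht.2⟩⟩).trans_eq' ?_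
  · rintro _ ⟨⟨y, hy₁, hy₂⟩, rfl⟩
    refine abs_sub_le_of_nonneg_of_le (by positivity) ?_ (mul_nonneg hy₁.1 hy₂.1)
      (mul_le_one₀ hy₁.2.le hy₂.1 hy₂.2.le)
    exact div_le_one_of_le₀ (by exact_mod_cast (Finset.card_filter_le _ _).trans_eq (by simp))
      (Nat.cast_nonneg N)
  · simp only [hc]
    congr 4
    exact congrArg _ (Finset.filter_congr fun n _ => by simp [(hxt n).1, (hxt n).2])

/-- **Hlawka–Koksma inequality in dimension 2.** If `f : [0,1]² → ℝ` has continuous mixed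
partial derivatives of order one (`fu = ∂f/∂u`, `fv = ∂f/∂v`, `fuv = ∂²f/∂u∂v` exist and are
continuous on `[0,1]²`), then for every finite sequence of points of `[0,1)²` the integration
error of the averages of `f` is bounded by `‖f‖_{2,1}` times the star discrepancy, where
`‖f‖_{2,1} = |f(1,1)| + ∫₀¹ |∂f/∂u(u,1)| du + ∫₀¹ |∂f/∂v(1,v)| dv + ∫₀¹∫₀¹ |∂²f/∂u∂v| du dv`. -/
theorem hlawka_koksma_inequality_dim2
    (f fu fv fuv : ℝ → ℝ → ℝ)
    (hfu : ∀ v ∈ Set.Icc (0 : ℝ) 1, ∀ u ∈ Set.Icc (0 : ℝ) 1,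
      HasDerivWithinAt (fun t => f t v) (fu u v) (Set.Icc 0 1) u)
    (hfv : ∀ u ∈ Set.Icc (0 : ℝ) 1, ∀ v ∈ Set.Icc (0 : ℝ) 1,
      HasDerivWithinAt (fun t => f u t) (fv u v) (Set.Icc 0 1) v)
    (hfuv : ∀ u ∈ Set.Icc (0 : ℝ) 1, ∀ v ∈ Set.Icc (0 : ℝ) 1,
      HasDerivWithinAt (fun t => fu u t) (fuv u v) (Set.Icc 0 1) v)
    (hcu : ContinuousOn (fun p : ℝ × ℝ => fu p.1 p.2) (Set.Icc 0 1 ×ˢ Set.Icc 0 1))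
    (hcv : ContinuousOn (fun p : ℝ × ℝ => fv p.1 p.2) (Set.Icc 0 1 ×ˢ Set.Icc 0 1))
    (hcuv : ContinuousOn (fun p : ℝ × ℝ => fuv p.1 p.2) (Set.Icc 0 1 ×ˢ Set.Icc 0 1))
    (N : ℕ) (hN : 0 < N) (x : Fin N → ℝ × ℝ)
    (hx : ∀ n, (x n).1 ∈ Set.Ico (0 : ℝ) 1 ∧ (x n).2 ∈ Set.Ico (0 : ℝ) 1) :
    |(∑ n, f (x n).1 (x n).2) / N - ∫ u in (0:ℝ)..1, ∫ v in (0:ℝ)..1, f u v|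
      ≤ (|f 1 1| + (∫ u in (0:ℝ)..1, |fu u 1|) + (∫ v in (0:ℝ)..1, |fv 1 v|)
          + ∫ u in (0:ℝ)..1, ∫ v in (0:ℝ)..1, |fuv u v|)
        * starDiscrepancy2 x := by
  have hf : HasContinuousMixedPartials f fu fv fuv := ⟨hfu, hfv, hfuv, hcu, hcv, hcuv⟩
  have : NeZero N := ⟨hN.ne'⟩
  set leb := volume.restrict (Ico (0 : ℝ) 1 ×ˢ Ico (0 : ℝ) 1)
  have hleb : ∀ᵐ p ∂leb, p ∈ Ico (0 : ℝ) 1 ×ˢ Ico (0 : ℝ) 1 :=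
    ae_restrict_mem (measurableSet_Ico.prod measurableSet_Ico)
  have hD : ∀ u ∈ Ioc (0 : ℝ) 1, ∀ v ∈ Ioc (0 : ℝ) 1,
      |(empiricalMeasure x).real (Ico 0 u ×ˢ Ico 0 v) - leb.real (Ico 0 u ×ˢ Ico 0 v)|
        ≤ starDiscrepancy2 x := fun u hu v hv => by
    rw [empiricalMeasure_real_apply, volume_real_Ico_prod_Ico (Ioc_subset_Icc_self hu)
      (Ioc_subset_Icc_self hv)]
    convert abs_card_div_sub_mul_le_starDiscrepancy2 hx (Ioc_subset_Icc_self hu)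
      (Ioc_subset_Icc_self hv) using 5
    congr 1
    ext n
    simp
  have key := hf.abs_integral_sub_integral_le (ae_empiricalMeasure_mem x hx) hleb hD
  rw [integral_empiricalMeasure, integral_volume_restrict_Ico_prod_Ico (hf.integrable
      (hleb.mono fun p hp => prod_mono Ico_subset_Icc_self Ico_subset_Icc_self hp)),
    setIntegral_Ioc_prod_Ioc (G := fun u v => |fuv u v|) zero_le_one zero_le_one
      hf.integrableOn_fst_snd.abs,
    ← intervalIntegral.integral_of_le zero_le_one,
    ← intervalIntegral.integral_of_le zero_le_one] at key
  have hD₀ : 0 ≤ starDiscrepancy2 x := Real.iSup_nonneg fun _ => abs_nonneg _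
  nlinarith [mul_nonneg (abs_nonneg (f 1 1)) hD₀]
end

section
/- (Discrepancy of the van der Corput sequence.) For every integer base b ≥ 2 there exists a constant C_b > 0 such that for all N ≥ 2 the star discrepancy of the first N terms of the base-b van der Corput sequence (φ_b(0), φ_b(1), φ_b(2), …) in [0,1) satisfies D*_N ≤ C_b · (log N)/N. -/
open Filter MeasureTheory
open scoped Classical

/-- The base-`b` radical inverse `φ_b(n) = Σ_j a_j b^{−j−1}`, where `n = Σ_j a_j b^j` is the
base-`b` expansion of `n` (the digit `a_j` equals `n / b^j % b`; for `b ≥ 2` all digits with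
index `j > n` vanish, so summing over `j ≤ n` suffices). -/
noncomputable def radicalInverse (b n : ℕ) : ℝ :=
  ∑ j ∈ Finset.range (n + 1), ((n / b ^ j % b : ℕ) : ℝ) / (b : ℝ) ^ (j + 1)

/-- The one-dimensional star discrepancy of the first `N` terms of a sequence `x` in `[0,1)`:
`D*_N(S) = sup_{y ∈ [0,1)} | A([0,y), S|_N)/N − y |`. -/
noncomputable def starDiscrepancy1 (x : ℕ → ℝ) (N : ℕ) : ℝ :=
  ⨆ y : Set.Ico (0 : ℝ) 1,
    |(((Finset.range N).filter (fun n => x n ∈ Set.Ico (0 : ℝ) (y : ℝ))).card : ℝ) / N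
      - (y : ℝ)|

/-!
Writing `rev_m` for the reversal of the `m` lowest base-`b` digits, one has
`b^m φ_b(n) = rev_m(n mod b^m) + φ_b(⌊n / b^m⌋)` with the last term in `[0, 1)`. Hence `φ_b(n)` lies
in the elementary interval `[c / b^m, (c + 1) / b^m)` iff `n ≡ rev_m(c) (mod b^m)`, and since every
residue class mod `b^m` meets `{0, …, N - 1}` in `N / b^m` points up to an error of one, each
elementary interval has local discrepancy at most one. Splitting `[0, c / b^m)` along the base-`b`
digits of `c` into at most `m (b - 1)` elementary intervals bounds the local discrepancy at
`b`-adic points by `m (b - 1)`; an arbitrary `y` is squeezed between two such points with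
`b^m ≥ N`, i.e. `m ≈ log N`, at the cost of one more.
-/

open Finset

section RadicalInverse

variable {b : ℕ}

theorem Nat.mod_pow_div_pow_mod (n : ℕ) {j m : ℕ} (hj : j < m) :
    n % b ^ m / b ^ j % b = n / b ^ j % b := by
  rw [show b ^ m = b ^ j * b ^ (m - j) by rw [← pow_add, Nat.add_sub_cancel' hj.le],
    Nat.mod_mul_right_div_self, Nat.mod_mod_of_dvd _ (dvd_pow_self b (by omega))]

def digitRev (b m r : ℕ) : ℕ := ∑ j ∈ range m, r / b ^ j % b * b ^ (m - 1 - j)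

theorem digitRev_succ (m r : ℕ) :
    digitRev b (m + 1) r = r % b * b ^ m + digitRev b m (r / b) := by
  rw [digitRev, sum_range_succ', add_comm, digitRev]
  congr 1
  · simp
  · refine sum_congr rfl fun j _ => ?_
    rw [Nat.div_div_eq_div_mul, ← pow_succ']
    congr 2
    omega

theorem digitRev_succ' (m r : ℕ) :
    digitRev b (m + 1) r = b * digitRev b m (r % b ^ m) + r / b ^ m % b := by
  rw [digitRev, sum_range_succ, digitRev, mul_sum]
  congr 1
  · refine sum_congr rfl fun j hj => ?_
    rw [Nat.mod_pow_div_pow_mod r (mem_range.1 hj), show m + 1 - 1 - j = m - 1 - j + 1 by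
      have := mem_range.1 hj; omega, pow_succ]
    ring
  · simp

theorem digitRev_lt (hb : 0 < b) (m r : ℕ) : digitRev b m r < b ^ m := by
  induction m generalizing r with
  | zero => simp [digitRev]
  | succ m ih =>
    calc digitRev b (m + 1) r < r % b * b ^ m + b ^ m := by
          rw [digitRev_succ]; exact Nat.add_lt_add_left (ih _) _
      _ = (r % b + 1) * b ^ m := by ring
      _ ≤ b * b ^ m := Nat.mul_le_mul_right _ (Nat.mod_lt r hb)
      _ = b ^ (m + 1) := (pow_succ' b m).symm

theorem digitRev_digitRev (hb : 0 < b) {m r : ℕ} (hr : r < b ^ m) :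
    digitRev b m (digitRev b m r) = r := by
  induction m generalizing r with
  | zero => simp_all [digitRev]
  | succ m ih =>
    have hq : r / b ^ m < b := Nat.div_lt_of_lt_mul (by rwa [← pow_succ])
    rw [digitRev_succ' m r, Nat.mod_eq_of_lt hq, digitRev_succ, Nat.mul_add_mod,
      Nat.mod_eq_of_lt hq, Nat.mul_add_div hb, Nat.div_eq_of_lt hq, add_zero,
      ih (Nat.mod_lt r (by positivity)), mul_comm]
    exact Nat.div_add_mod r (b ^ m)

theorem radicalInverse_eq_sum_range (hb : 1 < b) {n K : ℕ} (hK : n < K) :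
    radicalInverse b n = ∑ j ∈ range K, ((n / b ^ j % b : ℕ) : ℝ) / (b : ℝ) ^ (j + 1) := by
  refine sum_subset (range_subset_range.2 hK) fun j _ hj => ?_
  have : n < b ^ j :=
    (Nat.lt_pow_self hb).trans_le (Nat.pow_le_pow_right (by omega) (by simp at hj; omega))
  simp [Nat.div_eq_of_lt this]

theorem radicalInverse_eq (hb : 1 < b) (n : ℕ) :
    radicalInverse b n = ((n % b : ℕ) + radicalInverse b (n / b)) / b := by
  rw [radicalInverse_eq_sum_range hb (by omega : n < n + 2),
    radicalInverse_eq_sum_range hb (Nat.lt_succ_of_le (Nat.div_le_self n b)), sum_range_succ',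
    add_comm, add_div, sum_div]
  congr 1
  · simp
  · refine sum_congr rfl fun j _ => ?_
    rw [Nat.div_div_eq_div_mul, ← pow_succ', pow_succ _ (j + 1), div_div]

theorem radicalInverse_nonneg (b n : ℕ) : 0 ≤ radicalInverse b n :=
  sum_nonneg fun _ _ => by positivity

theorem radicalInverse_lt_one (hb : 1 < b) (n : ℕ) : radicalInverse b n < 1 := by
  induction n using Nat.strong_induction_on with
  | _ n ih =>
    rcases Nat.eq_zero_or_pos n with rfl | hn
    · simp [radicalInverse]
    have hdigit : ((n % b : ℕ) : ℝ) + 1 ≤ b := by exact_mod_cast Nat.mod_lt n (by omega)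
    have hrest := ih _ (Nat.div_lt_self hn hb)
    rw [radicalInverse_eq hb, div_lt_one (by positivity)]
    linarith

theorem radicalInverse_eq_digitRev (hb : 1 < b) (m n : ℕ) :
    radicalInverse b n = (digitRev b m (n % b ^ m) + radicalInverse b (n / b ^ m)) / b ^ m := by
  induction m with
  | zero => simp [digitRev]
  | succ m ih =>
    rw [ih, radicalInverse_eq hb (n / b ^ m), digitRev_succ',
      Nat.mod_mod_of_dvd _ (pow_dvd_pow b m.le_succ), Nat.mod_pow_div_pow_mod n m.lt_succ_self,
      Nat.div_div_eq_div_mul, ← pow_succ]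
    have : (b : ℝ) ≠ 0 := by positivity
    field_simp
    push_cast
    ring

theorem radicalInverse_mem_Ico_iff (hb : 1 < b) {m c : ℕ} (hc : c < b ^ m) (n : ℕ) :
    radicalInverse b n ∈ Set.Ico ((c : ℝ) / b ^ m) ((c + 1) / b ^ m) ↔
      n % b ^ m = digitRev b m c := by
  have hB : (0 : ℝ) < b ^ m := by positivity
  have hfloor : ⌊(digitRev b m (n % b ^ m) : ℝ) + radicalInverse b (n / b ^ m)⌋₊ =
      digitRev b m (n % b ^ m) := by
    rw [add_comm, Nat.floor_add_natCast (radicalInverse_nonneg _ _),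
      Nat.floor_eq_zero.2 (radicalInverse_lt_one hb _), zero_add]
  have hdigits : digitRev b m (n % b ^ m) = c ↔ n % b ^ m = digitRev b m c := by
    constructor
    · rintro rfl
      exact (digitRev_digitRev (by omega) (Nat.mod_lt _ (by positivity))).symm
    · intro h
      rw [h, digitRev_digitRev (by omega) hc]
  rw [← hdigits, ← hfloor, Nat.floor_eq_iff (by positivity [radicalInverse_nonneg b (n / b ^ m)]),
    radicalInverse_eq_digitRev hb m, Set.mem_Ico, div_le_div_iff_of_pos_right hB,
    div_lt_div_iff_of_pos_right hB]

end RadicalInverse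

theorem abs_card_filter_mod_eq_sub_div_le (N : ℕ) {M r : ℕ} (hM : 0 < M) (hr : r < M) :
    |(#{n ∈ range N | n % M = r} : ℝ) - N / M| ≤ 1 := by
  have hcount : #{n ∈ range N | n % M = r} = N / M + if r % M < N % M then 1 else 0 := by
    rw [← Nat.count_modEq_card N hM, Nat.count_eq_card_filter_range]
    exact congrArg card (filter_congr fun n _ => by rw [Nat.ModEq, Nat.mod_eq_of_lt hr])
  have hlo : ((N / M : ℕ) : ℝ) ≤ N / M := Nat.cast_div_le
  have hhi : (N : ℝ) / M < (N / M : ℕ) + 1 := by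
    rw [← Nat.floor_div_eq_div (K := ℝ)]
    exact Nat.lt_floor_add_one _
  rw [hcount, abs_le]
  split_ifs <;> push_cast <;> constructor <;> linarith

section LocalDiscrepancy

variable (x : ℕ → ℝ) (N : ℕ)

noncomputable def localDiscrepancy (y : ℝ) : ℝ := #{n ∈ range N | x n < y} - N * y

variable {x N}

theorem localDiscrepancy_sub {y z : ℝ} (hyz : y ≤ z) :
    localDiscrepancy x N z - localDiscrepancy x N y =
      #{n ∈ range N | x n ∈ Set.Ico y z} - N * (z - y) := by
  have hsplit : #{n ∈ range N | x n < z} = #{n ∈ range N | x n < y} +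
      #{n ∈ range N | x n ∈ Set.Ico y z} := by
    rw [← card_union_of_disjoint (disjoint_filter.2 fun n _ hy hyz => not_le.2 hy hyz.1),
      ← filter_or]
    exact congrArg card (filter_congr fun n _ => ⟨fun h => (lt_or_ge (x n) y).imp_right
      (⟨·, h⟩), fun h => h.elim (·.trans_le hyz) (·.2)⟩)
  rw [localDiscrepancy, localDiscrepancy, hsplit]
  push_cast
  ring

theorem localDiscrepancy_le_add {y z : ℝ} (hyz : y ≤ z) :
    localDiscrepancy x N y ≤ localDiscrepancy x N z + N * (z - y) := by
  have := localDiscrepancy_sub (x := x) (N := N) hyz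
  have : (0 : ℝ) ≤ #{n ∈ range N | x n ∈ Set.Ico y z} := Nat.cast_nonneg _
  linarith

theorem starDiscrepancy1_le_of_abs_localDiscrepancy_le (hx : ∀ n, 0 ≤ x n) (hN : 0 < N)
    {K : ℝ} (hK : ∀ y ∈ Set.Ico (0 : ℝ) 1, |localDiscrepancy x N y| ≤ K) :
    starDiscrepancy1 x N ≤ K / N := by
  have hN' : (0 : ℝ) < N := by exact_mod_cast hN
  have : Nonempty (Set.Ico (0 : ℝ) 1) := ⟨⟨0, by simp⟩⟩
  refine ciSup_le fun ⟨y, hy⟩ => ?_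
  have hfilter : #{n ∈ range N | x n ∈ Set.Ico 0 y} = #{n ∈ range N | x n < y} :=
    congrArg card (filter_congr fun n _ => ⟨(·.2), (⟨hx n, ·⟩)⟩)
  have hdiv : (#{n ∈ range N | x n < y} : ℝ) / N - y = localDiscrepancy x N y / N := by
    rw [localDiscrepancy]
    field_simp
  rw [hfilter, hdiv, abs_div, abs_of_pos hN']
  exact div_le_div_of_nonneg_right (hK y hy) hN'.le

variable {b : ℕ}

theorem abs_localDiscrepancy_div_pow_le (hb : 0 < b) (hx0 : ∀ n, 0 ≤ x n) (hx1 : ∀ n, x n < 1)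
    (helem : ∀ m c : ℕ, c < b ^ m → |localDiscrepancy x N ((c + 1) / b ^ m) -
      localDiscrepancy x N (c / b ^ m)| ≤ 1) {m c : ℕ} (hc : c ≤ b ^ m) :
    |localDiscrepancy x N (c / b ^ m)| ≤ m * (b - 1) := by
  induction m generalizing c with
  | zero =>
    obtain rfl | rfl : c = 0 ∨ c = 1 := by simp at hc; omega
    · simp [localDiscrepancy, fun n => not_lt.2 (hx0 n)]
    · simp [localDiscrepancy, hx1]
  | succ m ih =>
    set E : ℕ → ℝ := fun k => localDiscrepancy x N (k / b ^ (m + 1))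
    have hqe : b * (c / b) + c % b = c := Nat.div_add_mod c b
    have hq : c / b ≤ b ^ m := Nat.le_of_mul_le_mul_left
      ((Nat.mul_div_le c b).trans (hc.trans_eq (pow_succ' b m))) hb
    have hcoarse : E (b * (c / b)) = localDiscrepancy x N ((c / b : ℕ) / b ^ m) := by
      simp only [E]
      congr 1
      have : (b : ℝ) ≠ 0 := by positivity
      push_cast
      field_simp
      ring
    have hfine : |E c - E (b * (c / b))| ≤ ((c % b : ℕ) : ℝ) := by
      calc |E c - E (b * (c / b))| = dist (E (b * (c / b))) (E c) := by
            rw [Real.dist_eq, abs_sub_comm]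
        _ ≤ ∑ k ∈ Ico (b * (c / b)) c, dist (E k) (E (k + 1)) := dist_le_Ico_sum_dist E (by omega)
        _ ≤ ∑ k ∈ Ico (b * (c / b)) c, 1 := sum_le_sum fun k hk => by
            rw [Real.dist_eq, abs_sub_comm]
            simpa [E] using helem (m + 1) k (by simp at hk; omega)
        _ = ((c % b : ℕ) : ℝ) := by
            rw [sum_const, Nat.card_Ico, nsmul_one]
            congr 1
            omega
    have hdigit : ((c % b : ℕ) : ℝ) ≤ b - 1 := by
      have := Nat.mod_lt c hb
      rw [le_sub_iff_add_le]; exact_mod_cast this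
    calc |E c| ≤ |E (b * (c / b))| + |E c - E (b * (c / b))| := by
            linarith [abs_sub_abs_le_abs_sub (E c) (E (b * (c / b)))]
      _ ≤ m * (b - 1) + (b - 1) := add_le_add (hcoarse ▸ ih hq) (hfine.trans hdigit)
      _ = (m + 1 : ℕ) * (b - 1) := by push_cast; ring

theorem abs_localDiscrepancy_le (hb : 0 < b) (hx0 : ∀ n, 0 ≤ x n) (hx1 : ∀ n, x n < 1)
    (helem : ∀ m c : ℕ, c < b ^ m → |localDiscrepancy x N ((c + 1) / b ^ m) -
      localDiscrepancy x N (c / b ^ m)| ≤ 1) {m : ℕ} (hN : N ≤ b ^ m) {y : ℝ}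
    (hy : y ∈ Set.Ico (0 : ℝ) 1) :
    |localDiscrepancy x N y| ≤ m * (b - 1) + 1 := by
  have hB : (0 : ℝ) < b ^ m := by positivity
  have hNB : (N : ℝ) / b ^ m ≤ 1 := (div_le_one hB).2 (by exact_mod_cast hN)
  set c := ⌊b ^ m * y⌋₊
  have hc : c < b ^ m := by
    refine Nat.floor_lt (by positivity [hy.1]) |>.2 ?_
    push_cast
    nlinarith [hy.2]
  have hcy : (c : ℝ) / b ^ m ≤ y := (div_le_iff₀' hB).2 (Nat.floor_le (by positivity [hy.1]))
  have hyc : y < (c + 1) / b ^ m := (lt_div_iff₀' hB).2 (Nat.lt_floor_add_one _)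
  have hlo := localDiscrepancy_le_add (x := x) (N := N) hcy
  have hhi := localDiscrepancy_le_add (x := x) (N := N) hyc.le
  have hlo' : N * (y - c / b ^ m) ≤ 1 := calc
    _ ≤ (N : ℝ) * (1 / b ^ m) := by
      gcongr; rw [add_div] at hyc; linarith
    _ ≤ 1 := by rwa [mul_one_div]
  have hhi' : N * ((c + 1) / b ^ m - y) ≤ 1 := calc
    _ ≤ (N : ℝ) * (1 / b ^ m) := by gcongr; rw [add_div]; linarith
    _ ≤ 1 := by rwa [mul_one_div]
  have hleft := abs_le.1 (abs_localDiscrepancy_div_pow_le hb hx0 hx1 helem hc.le)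
  have hright := abs_le.1 (abs_localDiscrepancy_div_pow_le hb hx0 hx1 helem hc)
  push_cast at hright
  rw [abs_le]
  constructor <;> linarith

theorem abs_localDiscrepancy_radicalInverse_succ_sub_le {b : ℕ} (hb : 1 < b) (N : ℕ)
    {m c : ℕ} (hc : c < b ^ m) :
    |localDiscrepancy (radicalInverse b) N ((c + 1) / b ^ m) -
      localDiscrepancy (radicalInverse b) N (c / b ^ m)| ≤ 1 := by
  have hB : 0 < b ^ m := by positivity
  have hcount : #{n ∈ range N | radicalInverse b n ∈ Set.Ico ((c : ℝ) / b ^ m) ((c + 1) / b ^ m)}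
      = #{n ∈ range N | n % b ^ m = digitRev b m c} :=
    congrArg card (filter_congr fun n _ => radicalInverse_mem_Ico_iff hb hc n)
  rw [localDiscrepancy_sub (by gcongr; linarith), hcount, show ((c : ℝ) + 1) / b ^ m - c / b ^ m
    = 1 / b ^ m by ring, mul_one_div]
  exact_mod_cast abs_card_filter_mod_eq_sub_div_le N hB (digitRev_lt (by omega) m c)

theorem natLog_add_one_le_two_mul_logb {b N : ℕ} (hb : 1 < b) (hN : b ≤ N) :
    ((Nat.log b N + 1 : ℕ) : ℝ) ≤ 2 * Real.logb b N := by
  have hpos : (1 : ℝ) ≤ Nat.log b N := by exact_mod_cast Nat.log_pos hb hN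
  have hle := Real.natLog_le_logb N b
  push_cast
  linarith

/-- **Discrepancy of the van der Corput sequence.** For every base `b ≥ 2` there is a constant
`C_b > 0` such that for all `N ≥ 2` the star discrepancy of the first `N` terms of the base-`b`
van der Corput sequence `(φ_b(0), φ_b(1), φ_b(2), …)` is at most `C_b · (log N) / N`. -/
theorem van_der_Corput_starDiscrepancy_le (b : ℕ) (hb : 2 ≤ b) :
    ∃ C : ℝ, 0 < C ∧ ∀ N : ℕ, 2 ≤ N →
      starDiscrepancy1 (fun n => radicalInverse b n) N ≤ C * Real.log N / N := by
  refine ⟨2 * b / Real.log 2, by positivity, fun N hN => ?_⟩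
  set m := Nat.log 2 N + 1
  have hNm : N ≤ b ^ m :=
    (Nat.lt_pow_succ_log_self one_lt_two N).le.trans (Nat.pow_le_pow_left hb m)
  have hK : (m : ℝ) * (b - 1) + 1 ≤ 2 * b / Real.log 2 * Real.log N := calc
    _ ≤ (m : ℝ) * b := by nlinarith [show (1 : ℝ) ≤ m by simp [m]]
    _ ≤ 2 * Real.logb 2 N * b := by
      gcongr; exact_mod_cast natLog_add_one_le_two_mul_logb one_lt_two hN
    _ = 2 * b / Real.log 2 * Real.log N := by rw [Real.logb]; ring
  refine (starDiscrepancy1_le_of_abs_localDiscrepancy_le (radicalInverse_nonneg b) (by omega)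
    fun y hy => abs_localDiscrepancy_le (by omega) (radicalInverse_nonneg b)
      (radicalInverse_lt_one hb) (fun _ _ => abs_localDiscrepancy_radicalInverse_succ_sub_le hb N)
      hNm hy).trans ?_
  exact div_le_div_of_nonneg_right hK (Nat.cast_nonneg N)
end LocalDiscrepancy
end
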